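/- Let τ be a k-tangle in a finite graph G and let (A,B), (C,D) be maximal elements of τ with (A,B) ≠ (C,D). Then |(A ∪ C) ∩ (B ∩ D)| ≥ k. -/
import Mathlib


open Finset

variable {V : Type*} [Fintype V] [DecidableEq V]

/-- `(A,B)` is a separation of the graph `G`: `A ∪ B = V` and no edge joins
`A \ B` to `B \ A`. -/
def IsSep (G : SimpleGraph V) (A B : Finset V) : Prop :=
  A ∪ B = Finset.univ ∧ ∀ a ∈ A \ B, ∀ b ∈ B \ A, ¬ G.Adj a b

/-- `G = G[A₁] ∪ G[A₂] ∪ G[A₃]`: the three sets cover the vertices and every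
edge of `G` has both endpoints inside some `Aᵢ`. -/
def CoversGraph (G : SimpleGraph V) (A₁ A₂ A₃ : Finset V) : Prop :=
  A₁ ∪ A₂ ∪ A₃ = Finset.univ ∧
  ∀ a b, G.Adj a b →
    (a ∈ A₁ ∧ b ∈ A₁) ∨ (a ∈ A₂ ∧ b ∈ A₂) ∨ (a ∈ A₃ ∧ b ∈ A₃)

/-- `τ` is a `k`-tangle in `G`: it contains exactly one orientation of every
separation of order `< k`, contains only such separations, and no three small
sides of members of `τ` cover `G`. -/
def IsTangle (G : SimpleGraph V) (k : ℕ) (τ : Set (Finset V × Finset V)) : Prop :=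
  (∀ A B : Finset V, IsSep G A B → (A ∩ B).card < k → ((A, B) ∈ τ ↔ (B, A) ∉ τ)) ∧
  (∀ p ∈ τ, IsSep G p.1 p.2 ∧ (p.1 ∩ p.2).card < k) ∧
  (∀ p₁ ∈ τ, ∀ p₂ ∈ τ, ∀ p₃ ∈ τ,
    ¬ CoversGraph G (Prod.fst p₁) (Prod.fst p₂) (Prod.fst p₃))

/-- The partial order on separations: `(A,B) ≤ (C,D)` iff `A ⊆ C` and `D ⊆ B`. -/
def SepLE (p q : Finset V × Finset V) : Prop := p.1 ⊆ q.1 ∧ q.2 ⊆ p.2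

/-- `p` is a maximal element of `τ` with respect to `SepLE`. -/
def MaximalIn (τ : Set (Finset V × Finset V)) (p : Finset V × Finset V) : Prop :=
  p ∈ τ ∧ ∀ q ∈ τ, SepLE p q → q = p


lemma edge_side {G : SimpleGraph V} {A B : Finset V} (h : IsSep G A B)
    {a b : V} (hab : G.Adj a b) : (a ∈ A ∧ b ∈ A) ∨ (a ∈ B ∧ b ∈ B) := by
  obtain ⟨hU, hE⟩ := h
  have memU : ∀ x : V, x ∈ A ∨ x ∈ B := by
    intro x
    have : x ∈ A ∪ B := hU ▸ Finset.mem_univ x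
    simpa [Finset.mem_union] using this
  by_contra hc
  push_neg at hc
  obtain ⟨h1, h2⟩ := hc
  rcases memU a with ha | ha
  · have hbA : b ∉ A := fun hb => absurd (h1 ha hb) (by simp)
    have hbB : b ∈ B := (memU b).resolve_left hbA
    have haB : a ∉ B := fun h' => absurd (h2 h' hbB) (by simp)
    exact hE a (Finset.mem_sdiff.2 ⟨ha, haB⟩) b (Finset.mem_sdiff.2 ⟨hbB, hbA⟩) hab
  · have hbB : b ∉ B := fun hb => absurd (h2 ha hb) (by simp)
    have hbA : b ∈ A := (memU b).resolve_right hbB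
    have haA : a ∉ A := fun h' => absurd (h1 h' hbA) (by simp)
    exact hE b (Finset.mem_sdiff.2 ⟨hbA, hbB⟩) a (Finset.mem_sdiff.2 ⟨ha, haA⟩) hab.symm

theorem stmt4 {V : Type*} [Fintype V] [DecidableEq V] (G : SimpleGraph V) (k : ℕ)
    (τ : Set (Finset V × Finset V)) (hτ : IsTangle G k τ)
    (A B C D : Finset V) (hAB : MaximalIn τ (A, B)) (hCD : MaximalIn τ (C, D))
    (hne : (A, B) ≠ (C, D)) :
    k ≤ ((A ∪ C) ∩ (B ∩ D)).card := by
  by_contra hlt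
  push_neg at hlt
  obtain ⟨horient, hmem, hcov⟩ := hτ
  have hsepAB : IsSep G A B := (hmem _ hAB.1).1
  have hsepCD : IsSep G C D := (hmem _ hCD.1).1
  -- (A ∪ C, B ∩ D) is a separation
  have hsep : IsSep G (A ∪ C) (B ∩ D) := by
    constructor
    · apply Finset.eq_univ_of_forall
      intro x
      have hx1 : x ∈ A ∪ B := hsepAB.1 ▸ Finset.mem_univ x
      have hx2 : x ∈ C ∪ D := hsepCD.1 ▸ Finset.mem_univ x
      simp only [Finset.mem_union, Finset.mem_inter] at *
      tauto
    · intro a ha b hb hab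
      simp only [Finset.mem_sdiff, Finset.mem_union, Finset.mem_inter, not_and_or] at ha hb
      obtain ⟨haAC, haBD⟩ := ha
      obtain ⟨⟨hbB, hbD⟩, hbAC⟩ := hb
      push_neg at hbAC
      rcases edge_side hsepAB hab with ⟨h1, h2⟩ | ⟨h1, h2⟩
      · exact hbAC.1 h2
      · rcases edge_side hsepCD hab with ⟨h3, h4⟩ | ⟨h3, h4⟩
        · exact hbAC.2 h4
        · rcases haBD with h | h
          · exact h h1
          · exact h h3
  rcases Classical.em ((A ∪ C, B ∩ D) ∈ τ) with hin | hout
  · -- maximality forces A = C, B = D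
    have e1 := hAB.2 _ hin ⟨Finset.subset_union_left, Finset.inter_subset_left⟩
    have e2 := hCD.2 _ hin ⟨Finset.subset_union_right, Finset.inter_subset_right⟩
    apply hne
    have := e1.symm.trans e2
    exact Prod.ext (congrArg Prod.fst this) (congrArg Prod.snd this)
  · have hin' : (B ∩ D, A ∪ C) ∈ τ := by
      have h := horient (A ∪ C) (B ∩ D) hsep hlt
      by_contra h'
      exact hout (h.2 h')
    apply hcov _ hAB.1 _ hCD.1 _ hin'
    constructor
    · apply Finset.eq_univ_of_forall
      intro x
      have hx1 : x ∈ A ∪ B := hsepAB.1 ▸ Finset.mem_univ x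
      have hx2 : x ∈ C ∪ D := hsepCD.1 ▸ Finset.mem_univ x
      simp only [Finset.mem_union, Finset.mem_inter] at *
      tauto
    · intro a b hab
      rcases edge_side hsepAB hab with h1 | h1
      · exact Or.inl h1
      · rcases edge_side hsepCD hab with h2 | h2
        · exact Or.inr (Or.inl h2)
        · exact Or.inr (Or.inr (by simp [Finset.mem_inter, h1.1, h1.2, h2.1, h2.2]))
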